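/- arXiv:1104.2504 — 3 statements merged into one kernel-verified Lean document; each statement's English description precedes it below -/
import Mathlib

section
/- Let N, M be positive integers with M ≤ N, let K be a real symmetric N×N matrix, let Q be a real N×M matrix of rank M, and suppose that vᵀKv > 0 for every nonzero vector v ∈ ℝᴺ with Qᵀv = 0. Then the (N+M)×(N+M) block matrix [[K, Q], [Qᵀ, 0]] is invertible; equivalently, for every d ∈ ℝᴺ the RBF interpolation system Ku + Qc = d, Qᵀu = 0 has a unique solution (u, c) ∈ ℝᴺ × ℝᴹ. -/
open Matrix

/-- The block matrix of the RBF interpolation system is invertible when `K` is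
symmetric and strictly conditionally positive definite w.r.t. a full-column-rank `Q`;
equivalently, the system `Ku + Qc = d`, `Qᵀu = 0` has a unique solution for every `d`. -/
theorem rbf_system_invertible (N M : ℕ) (hN : 0 < N) (hM : 0 < M) (hMN : M ≤ N)
    (K : Matrix (Fin N) (Fin N) ℝ) (hK : K.IsSymm)
    (Q : Matrix (Fin N) (Fin M) ℝ) (hQ : Q.rank = M)
    (hpos : ∀ v : Fin N → ℝ, v ≠ 0 → Qᵀ.mulVec v = 0 → 0 < v ⬝ᵥ K.mulVec v) :
    IsUnit (Matrix.fromBlocks K Q Qᵀ (0 : Matrix (Fin M) (Fin M) ℝ)) ∧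
      ∀ d : Fin N → ℝ, ∃! uc : (Fin N → ℝ) × (Fin M → ℝ),
        K.mulVec uc.1 + Q.mulVec uc.2 = d ∧ Qᵀ.mulVec uc.1 = 0 := by
  set A := Matrix.fromBlocks K Q Qᵀ (0 : Matrix (Fin M) (Fin M) ℝ) with hA
  -- Q has trivial kernel
  have hQinj : Function.Injective Q.mulVec := by
    rw [show Q.mulVec = Q.mulVecLin from rfl, ← LinearMap.ker_eq_bot]
    have h1 := LinearMap.finrank_range_add_finrank_ker Q.mulVecLin
    unfold Matrix.rank at hQ
    rw [hQ] at h1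
    have h2 : Module.finrank ℝ (Fin M → ℝ) = M := by simp
    rw [h2] at h1
    have h3 : Module.finrank ℝ (LinearMap.ker Q.mulVecLin) = 0 := by omega
    exact Submodule.finrank_eq_zero.mp h3
  -- the key kernel computation
  have hker : ∀ u c, K.mulVec u + Q.mulVec c = 0 → Qᵀ.mulVec u = 0 → u = 0 ∧ c = 0 := by
    intro u c h1 h2
    have hu : u = 0 := by
      by_contra hu0
      have hp := hpos u hu0 h2
      have : u ⬝ᵥ (K.mulVec u + Q.mulVec c) = 0 := by rw [h1, dotProduct_zero]
      rw [dotProduct_add] at this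
      have hqc : u ⬝ᵥ Q.mulVec c = 0 := by
        rw [dotProduct_mulVec, ← mulVec_transpose, h2, zero_dotProduct]
      rw [hqc, add_zero] at this
      exact absurd this (ne_of_gt hp)
    have hc : c = 0 := by
      apply hQinj
      rw [mulVec_zero]
      have := h1
      rw [hu, mulVec_zero, zero_add] at this
      exact this
    exact ⟨hu, hc⟩
  -- injectivity of A
  have hAinj : Function.Injective A.mulVec := by
    intro x y hxy
    have hsub : A.mulVec (x - y) = 0 := by rw [mulVec_sub, hxy, sub_self]
    have hx : x - y = Sum.elim ((x - y) ∘ Sum.inl) ((x - y) ∘ Sum.inr) := by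
      funext i; cases i <;> rfl
    rw [hx, hA, fromBlocks_mulVec] at hsub
    have h1 : K.mulVec ((x - y) ∘ Sum.inl) + Q.mulVec ((x - y) ∘ Sum.inr) = 0 := by
      funext i; exact congrFun hsub (Sum.inl i)
    have h2 : Qᵀ.mulVec ((x - y) ∘ Sum.inl) + (0 : Matrix (Fin M) (Fin M) ℝ).mulVec ((x - y) ∘ Sum.inr) = 0 := by
      funext j; exact congrFun hsub (Sum.inr j)
    rw [zero_mulVec, add_zero] at h2
    obtain ⟨hu, hc⟩ := hker _ _ h1 h2
    have : x - y = 0 := by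
      funext i
      cases i with
      | inl i => exact congrFun hu i
      | inr j => exact congrFun hc j
    exact sub_eq_zero.mp this
  have hAunit : IsUnit A := mulVec_injective_iff_isUnit.mp hAinj
  refine ⟨hAunit, fun d => ?_⟩
  -- surjectivity
  have hAsurj : Function.Surjective A.mulVec := by
    have : Function.Injective A.mulVecLin := hAinj
    exact (LinearMap.injective_iff_surjective.mp this)
  obtain ⟨x, hx⟩ := hAsurj (Sum.elim d 0)
  refine ⟨(x ∘ Sum.inl, x ∘ Sum.inr), ?_, ?_⟩
  · have hxe : x = Sum.elim (x ∘ Sum.inl) (x ∘ Sum.inr) := by funext i; cases i <;> rfl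
    rw [hxe, hA, fromBlocks_mulVec] at hx
    constructor
    · funext i; exact congrFun hx (Sum.inl i)
    · have h2 : Qᵀ.mulVec (x ∘ Sum.inl) + (0 : Matrix (Fin M) (Fin M) ℝ).mulVec (x ∘ Sum.inr) = 0 := by
        funext j; exact congrFun hx (Sum.inr j)
      rwa [zero_mulVec, add_zero] at h2
  · rintro ⟨u, c⟩ ⟨h1, h2⟩
    have hux : A.mulVec (Sum.elim u c) = Sum.elim d 0 := by
      rw [hA, fromBlocks_mulVec]
      funext i
      cases i with
      | inl i => simpa using congrFun h1 i
      | inr j => simpa [zero_mulVec] using congrFun h2 j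
    have := hAinj (hux.trans hx.symm)
    exact Prod.ext (by funext i; exact congrFun this (Sum.inl i))
      (by funext j; exact congrFun this (Sum.inr j))
end

section
/- Let N, M be positive integers with M ≤ N, let K be a real symmetric N×N matrix, let Q be a real N×M matrix of rank M, and suppose that vᵀKv < 0 for every nonzero vector v ∈ ℝᴺ with Qᵀv = 0. Then the (N+M)×(N+M) block matrix [[K, Q], [Qᵀ, 0]] is invertible. -/
open Matrix

/-- The block matrix of the RBF interpolation system is invertible when `K` is
symmetric and strictly conditionally negative definite w.r.t. a full-column-rank `Q`. -/
theorem rbf_system_invertible_of_neg (N M : ℕ) (hN : 0 < N) (hM : 0 < M) (hMN : M ≤ N)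
    (K : Matrix (Fin N) (Fin N) ℝ) (hK : K.IsSymm)
    (Q : Matrix (Fin N) (Fin M) ℝ) (hQ : Q.rank = M)
    (hneg : ∀ v : Fin N → ℝ, v ≠ 0 → Qᵀ.mulVec v = 0 → v ⬝ᵥ K.mulVec v < 0) :
    IsUnit (Matrix.fromBlocks K Q Qᵀ (0 : Matrix (Fin M) (Fin M) ℝ)) := by
  -- Q has injective mulVec
  have hQinj : Function.Injective Q.mulVec := by
    show Function.Injective Q.mulVecLin
    rw [← LinearMap.ker_eq_bot]
    have h1 : Module.finrank ℝ (LinearMap.range Q.mulVecLin)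
        + Module.finrank ℝ (LinearMap.ker Q.mulVecLin)
        = Module.finrank ℝ (Fin M → ℝ) := LinearMap.finrank_range_add_finrank_ker _
    rw [show Module.finrank ℝ (LinearMap.range Q.mulVecLin) = M from hQ,
      Module.finrank_fintype_fun_eq_card, Fintype.card_fin] at h1
    have : Module.finrank ℝ (LinearMap.ker Q.mulVecLin) = 0 := by omega
    exact Submodule.finrank_eq_zero.mp this
  rw [Matrix.isUnit_iff_isUnit_det, isUnit_iff_ne_zero]
  intro hdet
  obtain ⟨w, hw0, hw⟩ := (Matrix.exists_mulVec_eq_zero_iff).mpr hdet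
  set u : Fin N → ℝ := w ∘ Sum.inl with hu
  set c : Fin M → ℝ := w ∘ Sum.inr with hc
  have hwelim : w = Sum.elim u c := by ext (i | j) <;> rfl
  rw [hwelim, Matrix.fromBlocks_mulVec] at hw
  have h1 : K.mulVec u + Q.mulVec c = 0 := congrArg (· ∘ Sum.inl) hw
  have h2 : Qᵀ.mulVec u + (0 : Matrix (Fin M) (Fin M) ℝ).mulVec c = 0 :=
    congrArg (· ∘ Sum.inr) hw
  rw [Matrix.zero_mulVec, add_zero] at h2
  -- u ⬝ K u = 0
  have hdp : u ⬝ᵥ (K.mulVec u + Q.mulVec c) = 0 := by rw [h1, dotProduct_zero]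
  rw [dotProduct_add, Matrix.dotProduct_mulVec u Q c, ← Matrix.mulVec_transpose, h2,
    zero_dotProduct, add_zero] at hdp
  have hu0 : u = 0 := by
    by_contra h
    exact absurd hdp (ne_of_lt (hneg u h h2))
  rw [hu0, Matrix.mulVec_zero, zero_add] at h1
  have hc0 : c = 0 := hQinj (by rw [h1, Matrix.mulVec_zero])
  apply hw0
  rw [hwelim, hu0, hc0]
  ext (i | j) <;> rfl
end

section
/- Let N, M be positive integers with M ≤ N, let K be a real symmetric N×N matrix that is strictly conditionally positive definite with respect to a real N×M matrix Q of rank M (i.e. vᵀKv > 0 for every nonzero v with Qᵀv = 0), let T be a real N×(N−M) matrix with orthonormal columns satisfying QᵀT = 0, and let L be a real N×M matrix with orthonormal columns whose column space equals the column space of Q. Then for every d ∈ ℝᴺ the unique solution (u, c) of the RBF interpolation system Ku + Qc = d, Qᵀu = 0 is given explicitly by u = T(TᵀKT)⁻¹Tᵀd and c = (LᵀQ)⁻¹Lᵀ(d − Ku). -/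
open Matrix

lemma aux_dot {n m : Type*} [Fintype n] [Fintype m] (A : Matrix n m ℝ) (v : m → ℝ) (x : n → ℝ) :
    A.mulVec v ⬝ᵥ x = v ⬝ᵥ Aᵀ.mulVec x := by
  rw [Matrix.dotProduct_mulVec, Matrix.vecMul_transpose]

lemma aux_perp {n m : Type*} [Fintype n] [Fintype m] [DecidableEq m]
    (A : Matrix n m ℝ) (x : n → ℝ) :
    Aᵀ.mulVec x = 0 ↔ ∀ w : m → ℝ, A.mulVec w ⬝ᵥ x = 0 := by
  constructor
  · intro h w
    rw [aux_dot, h, dotProduct_zero]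
  · intro h
    funext j
    have h2 : A.mulVec (Pi.single j 1) = fun i => A i j := by
      ext i; simp [Matrix.mulVec_single]
    have := h (Pi.single j 1)
    rw [h2] at this
    simpa [Matrix.mulVec, dotProduct, Matrix.transpose_apply, mul_comm] using this


/-- Explicit solution of the RBF interpolation system via the decoupled equations:
for every `d`, `(u, c)` solves `Ku + Qc = d`, `Qᵀu = 0` if and only if
`u = T (TᵀKT)⁻¹ Tᵀ d` and `c = (LᵀQ)⁻¹ Lᵀ (d − Ku)`. -/
theorem rbf_explicit_solution (N M : ℕ) (hN : 0 < N) (hM : 0 < M) (hMN : M ≤ N)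
    (K : Matrix (Fin N) (Fin N) ℝ) (hK : K.IsSymm)
    (Q : Matrix (Fin N) (Fin M) ℝ) (hQ : Q.rank = M)
    (hpos : ∀ v : Fin N → ℝ, v ≠ 0 → Qᵀ.mulVec v = 0 → 0 < v ⬝ᵥ K.mulVec v)
    (T : Matrix (Fin N) (Fin (N - M)) ℝ)
    (hTortho : Tᵀ * T = 1) (hQT : Qᵀ * T = 0)
    (L : Matrix (Fin N) (Fin M) ℝ) (hLortho : Lᵀ * L = 1)
    (hcol : LinearMap.range L.mulVecLin = LinearMap.range Q.mulVecLin) :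
    ∀ d : Fin N → ℝ, ∀ u : Fin N → ℝ, ∀ c : Fin M → ℝ,
      (K.mulVec u + Q.mulVec c = d ∧ Qᵀ.mulVec u = 0) ↔
        (u = T.mulVec ((Tᵀ * K * T)⁻¹.mulVec (Tᵀ.mulVec d)) ∧
          c = (Lᵀ * Q)⁻¹.mulVec (Lᵀ.mulVec (d - K.mulVec u))) := by
  -- T is injective on vectors
  have hTinj : ∀ w : Fin (N - M) → ℝ, T.mulVec w = 0 → w = 0 := by
    intro w hw
    have : (Tᵀ * T).mulVec w = 0 := by
      rw [← Matrix.mulVec_mulVec, hw, Matrix.mulVec_zero]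
    rwa [hTortho, Matrix.one_mulVec] at this
  -- Q is injective on vectors
  have hQinj : ∀ v : Fin M → ℝ, Q.mulVec v = 0 → v = 0 := by
    have hker : LinearMap.ker Q.mulVecLin = ⊥ := by
      have h1 := LinearMap.finrank_range_add_finrank_ker Q.mulVecLin
      rw [Matrix.rank] at hQ
      rw [hQ, Module.finrank_pi] at h1
      simp only [Fintype.card_fin] at h1
      have : Module.finrank ℝ (LinearMap.ker Q.mulVecLin) = 0 := by omega
      exact Submodule.finrank_eq_zero.mp this
    intro v hv
    have hv' : v ∈ LinearMap.ker Q.mulVecLin :=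
      LinearMap.mem_ker.mpr (by rw [Matrix.mulVecLin_apply]; exact hv)
    rwa [hker, Submodule.mem_bot] at hv'
  -- range of T equals kernel of Qᵀ
  have hrange : LinearMap.range T.mulVecLin = LinearMap.ker Qᵀ.mulVecLin := by
    have hle : LinearMap.range T.mulVecLin ≤ LinearMap.ker Qᵀ.mulVecLin := by
      rintro x ⟨w, rfl⟩
      refine LinearMap.mem_ker.mpr ?_
      rw [Matrix.mulVecLin_apply, Matrix.mulVecLin_apply, Matrix.mulVec_mulVec, hQT,
        Matrix.zero_mulVec]
    have hinjlin : Function.Injective T.mulVecLin := by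
      rw [← LinearMap.ker_eq_bot, LinearMap.ker_eq_bot']
      intro w hw
      exact hTinj w (by rw [← Matrix.mulVecLin_apply]; exact hw)
    have hdimT : Module.finrank ℝ (LinearMap.range T.mulVecLin) = N - M := by
      rw [LinearMap.finrank_range_of_inj hinjlin, Module.finrank_pi]
      simp
    have hdimker : Module.finrank ℝ (LinearMap.ker Qᵀ.mulVecLin) = N - M := by
      have h1 := LinearMap.finrank_range_add_finrank_ker Qᵀ.mulVecLin
      have h2 : Module.finrank ℝ (LinearMap.range Qᵀ.mulVecLin) = M := by
        have h3 := Matrix.rank_transpose Q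
        rw [hQ] at h3
        simpa [Matrix.rank] using h3
      rw [h2, Module.finrank_pi] at h1
      simp only [Fintype.card_fin] at h1
      omega
    exact Submodule.eq_of_le_of_finrank_le hle (by rw [hdimT, hdimker])
  -- membership rephrasing
  have hmem : ∀ x : Fin N → ℝ, Qᵀ.mulVec x = 0 → ∃ w, x = T.mulVec w := by
    intro x hx
    have hx' : x ∈ LinearMap.ker Qᵀ.mulVecLin :=
      LinearMap.mem_ker.mpr (by rw [Matrix.mulVecLin_apply]; exact hx)
    rw [← hrange] at hx'
    obtain ⟨w, hw⟩ := hx'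
    exact ⟨w, by rw [← hw, Matrix.mulVecLin_apply]⟩
  -- TᵀKT is positive definite
  set A := Tᵀ * K * T with hA
  have hApos : A.PosDef := by
    constructor
    · show Aᴴ = A
      rw [Matrix.conjTranspose_eq_transpose_of_trivial]
      rw [hA, Matrix.transpose_mul, Matrix.transpose_mul, Matrix.transpose_transpose,
        hK.eq, Matrix.mul_assoc]
    · intro x hx
      have hTx : T.mulVec x ≠ 0 := fun h => hx (Finsupp.coe_eq_zero.mp (hTinj x h))
      have hQTx : Qᵀ.mulVec (T.mulVec x) = 0 := by
        rw [Matrix.mulVec_mulVec, hQT, Matrix.zero_mulVec]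
      have hp := hpos (T.mulVec x) hTx hQTx
      have heq : (T.mulVec x) ⬝ᵥ K.mulVec (T.mulVec x) = x ⬝ᵥ A.mulVec x := by
        rw [aux_dot T x (K.mulVec (T.mulVec x))]
        simp only [Matrix.mulVec_mulVec]
        rw [← Matrix.mul_assoc, ← hA]
      rw [heq] at hp
      simpa [dotProduct, Matrix.mulVec, Finsupp.sum_fintype, Finset.mul_sum, mul_assoc] using hp
  have hAdet : IsUnit A.det := (Matrix.isUnit_iff_isUnit_det A).mp hApos.isUnit
  -- LᵀQ is invertible
  have hLQker : ∀ v : Fin M → ℝ, (Lᵀ * Q).mulVec v = 0 → v = 0 := by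
    intro v hv
    have hQv : Q.mulVec v ∈ LinearMap.range L.mulVecLin := by
      rw [hcol]; exact ⟨v, by rw [Matrix.mulVecLin_apply]⟩
    obtain ⟨w, hw⟩ := hQv
    rw [Matrix.mulVecLin_apply] at hw
    have h0 : Lᵀ.mulVec (Q.mulVec v) = 0 := by rw [Matrix.mulVec_mulVec]; exact hv
    rw [← hw, Matrix.mulVec_mulVec, hLortho, Matrix.one_mulVec] at h0
    have hQv0 : Q.mulVec v = 0 := by rw [← hw, h0, Matrix.mulVec_zero]
    exact hQinj v hQv0
  have hLQdet : IsUnit (Lᵀ * Q).det := by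
    rw [← Matrix.isUnit_iff_isUnit_det, ← Matrix.mulVec_injective_iff_isUnit]
    intro a b hab
    have h0 : (Lᵀ * Q).mulVec (a - b) = 0 := by
      rw [Matrix.mulVec_sub, hab, sub_self]
    have := hLQker _ h0
    rwa [sub_eq_zero] at this
  -- key: Lᵀx = 0 and Tᵀx = 0 imply x = 0
  have hzero : ∀ x : Fin N → ℝ, Lᵀ.mulVec x = 0 → Tᵀ.mulVec x = 0 → x = 0 := by
    intro x hL hT
    have hQx : Qᵀ.mulVec x = 0 := by
      rw [aux_perp]
      intro v
      have hQv : Q.mulVec v ∈ LinearMap.range L.mulVecLin := by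
        rw [hcol]; exact ⟨v, by rw [Matrix.mulVecLin_apply]⟩
      obtain ⟨w, hw⟩ := hQv
      rw [Matrix.mulVecLin_apply] at hw
      rw [← hw, aux_dot, hL, dotProduct_zero]
    obtain ⟨w, rfl⟩ := hmem x hQx
    rw [Matrix.mulVec_mulVec, hTortho, Matrix.one_mulVec] at hT
    rw [hT, Matrix.mulVec_zero]
  -- transpose fact
  have hTQ : Tᵀ * Q = 0 := by
    have h := congrArg Matrix.transpose hQT
    rwa [Matrix.transpose_mul, Matrix.transpose_transpose, Matrix.transpose_zero] at h
  intro d u c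
  constructor
  · rintro ⟨h1, h2⟩
    obtain ⟨w, rfl⟩ := hmem u h2
    have hTd : Tᵀ.mulVec d = A.mulVec w := by
      rw [← h1, Matrix.mulVec_add]
      simp only [Matrix.mulVec_mulVec]
      rw [hTQ, Matrix.zero_mulVec, add_zero, ← Matrix.mul_assoc, ← hA]
    have hc : (Lᵀ * Q).mulVec c = Lᵀ.mulVec (d - K.mulVec (T.mulVec w)) := by
      rw [Matrix.mulVec_sub, ← h1, Matrix.mulVec_add]
      simp only [Matrix.mulVec_mulVec]
      abel
    constructor
    · have e : A⁻¹.mulVec (Tᵀ.mulVec d) = w := by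
        rw [hTd, Matrix.mulVec_mulVec, Matrix.nonsing_inv_mul A hAdet, Matrix.one_mulVec]
      rw [e]
    · rw [← hc, Matrix.mulVec_mulVec, Matrix.nonsing_inv_mul _ hLQdet, Matrix.one_mulVec]
  · rintro ⟨hu, hc⟩
    have h2 : Qᵀ.mulVec u = 0 := by
      rw [hu, Matrix.mulVec_mulVec, hQT, Matrix.zero_mulVec]
    refine ⟨?_, h2⟩
    set r := d - K.mulVec u with hr
    have key : A.mulVec (A⁻¹.mulVec (Tᵀ.mulVec d)) = Tᵀ.mulVec d := by
      rw [Matrix.mulVec_mulVec, Matrix.mul_nonsing_inv A hAdet, Matrix.one_mulVec]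
    have e2 : Tᵀ.mulVec (K.mulVec u) = Tᵀ.mulVec d := by
      rw [hu, Matrix.mulVec_mulVec, Matrix.mulVec_mulVec, ← hA, key]
    have keyL : (Lᵀ * Q).mulVec ((Lᵀ * Q)⁻¹.mulVec (Lᵀ.mulVec r)) = Lᵀ.mulVec r := by
      rw [Matrix.mulVec_mulVec, Matrix.mul_nonsing_inv _ hLQdet, Matrix.one_mulVec]
    have e3 : Lᵀ.mulVec (Q.mulVec c) = Lᵀ.mulVec r := by
      rw [hc, Matrix.mulVec_mulVec]
      exact keyL
    have hgoal : Q.mulVec c = r := by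
      set x := Q.mulVec c - r with hx
      have hTxz : Tᵀ.mulVec x = 0 := by
        rw [hx, Matrix.mulVec_sub, Matrix.mulVec_mulVec, hTQ, Matrix.zero_mulVec, hr,
          Matrix.mulVec_sub, e2]
        simp
      have hLxz : Lᵀ.mulVec x = 0 := by
        rw [hx, Matrix.mulVec_sub, e3, sub_self]
      have hx0 := hzero x hLxz hTxz
      rw [hx, sub_eq_zero] at hx0
      exact hx0
    rw [hgoal, hr]
    abel
end
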